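/- Let R ∈ SO(d) with R ≠ I, let σ = ‖log R‖₂ ∈ (0, π] be the largest rotation angle of R, and let U ∈ ℝ^{d×2} satisfy UᵀU = I₂ and Uᵀ(log R)U = σ·A₂, where A₂ = [[0,−1],[1,0]]. Then for every x ∈ S^{d-1} with Rx ≠ x, ⟨ (Rx − x)/‖Rx − x‖ , R·U A₂ Uᵀ x ⟩ ≥ ‖U A₂ Uᵀ x‖² · cos(σ/2). -/

import Mathlib

/-!
Since `Uᵀ L U = σ A₂` already attains the bound `‖L‖ ≤ σ`, equality in Cauchy–Schwarz forces
`L U = σ U A₂`. Hence `w = U A₂ Uᵀ x` satisfies `L² w = -σ² w`, so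
`R w = cos σ • w - sin σ • U Uᵀ x`, and as `w ⟂ x` this gives `⟨Rx - x, Rw⟩ = sin σ ‖w‖²`.
On the other hand `-L² = LᵀL` has an orthonormal eigenbasis on which `R + Rᵀ` acts by
`2 cos θᵢ` with `0 ≤ θᵢ ≤ σ ≤ π`, so `⟨x, Rx⟩ ≥ cos σ` and `‖Rx - x‖ ≤ 2 sin (σ/2)`.
Dividing and using `sin σ = 2 sin (σ/2) cos (σ/2)` gives the bound.
-/

open MeasureTheory Matrix Real
notation "⟪" x ", " y "⟫_ℝ" => @inner ℝ _ _ x y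

noncomputable def frobNorm {d : ℕ} (A : Matrix (Fin d) (Fin d) ℝ) : ℝ :=
  Real.sqrt (∑ i, ∑ j, A i j ^ 2)

noncomputable def nuclearNorm {d : ℕ} (A : Matrix (Fin d) (Fin d) ℝ) : ℝ :=
  ∑ i, Real.sqrt ((Matrix.isHermitian_conjTranspose_mul_self A).eigenvalues i)

/-- `μ` is the uniform (rotation-invariant) probability distribution on the unit
sphere `S^{d-1} ⊂ ℝ^d`. -/
def IsUniformOnSphere {d : ℕ} (μ : Measure (EuclideanSpace ℝ (Fin d))) : Prop :=
  IsProbabilityMeasure μ ∧ (∀ᵐ x ∂μ, ‖x‖ = 1) ∧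
  ∀ Q : Matrix (Fin d) (Fin d) ℝ, Qᵀ * Q = 1 →
    Measure.map (fun x => Matrix.toEuclideanLin Q x) μ = μ

/-- The Beta function. -/
noncomputable def Beta (m n : ℝ) : ℝ := Real.Gamma m * Real.Gamma n / Real.Gamma (m + n)

noncomputable def ptilde (d : ℕ) : ℝ :=
  (1 + Beta ((d : ℝ) - 1) (1/2) / Beta (((d : ℝ) - 1)/2) (1/2))⁻¹

def A2 : Matrix (Fin 2) (Fin 2) ℝ := !![0, -1; 1, 0]

noncomputable def rot2 (θ : ℝ) : Matrix (Fin 2) (Fin 2) ℝ :=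
  !![Real.cos θ, -Real.sin θ; Real.sin θ, Real.cos θ]

open scoped Nat

namespace Real

lemma mul_sinc (θ : ℝ) : θ * sinc θ = sin θ := by
  rcases eq_or_ne θ 0 with rfl | h
  · simp
  · rw [sinc_of_ne_zero h]
    field_simp

lemma hasSum_sinc (θ : ℝ) : HasSum (fun k : ℕ => (-θ ^ 2) ^ k / (2 * k + 1)!) (sinc θ) := by
  rcases eq_or_ne θ 0 with rfl | h
  · rw [sinc_zero]
    convert hasSum_ite_eq 0 (1 : ℝ) using 1
    funext k
    rcases k with _ | k <;> simp
  · rw [sinc_of_ne_zero h]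
    have hterm : (fun k : ℕ => (-θ ^ 2) ^ k / (2 * k + 1)!) =
        fun k : ℕ => (-1) ^ k * θ ^ (2 * k + 1) / (2 * k + 1)! / θ := by
      funext k
      rw [neg_pow, ← pow_mul, pow_succ]
      field_simp
    rw [hterm]
    exact (hasSum_sin θ).div_const θ

end Real

section Exp

variable {E : Type*} [NormedAddCommGroup E] [NormedSpace ℝ E] [CompleteSpace E]

theorem ContinuousLinearMap.exp_apply_of_apply_apply_eq (T : E →L[ℝ] E) {v : E} {θ : ℝ}
    (h : T (T v) = -θ ^ 2 • v) :
    NormedSpace.exp T v = cos θ • v + sinc θ • T v := by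
  have heven : ∀ k : ℕ, (T ^ (2 * k)) v = (-θ ^ 2) ^ k • v := by
    intro k
    induction k with
    | zero => simp
    | succ k ih =>
      rw [mul_add, mul_one, pow_add, mul_apply_eq_comp, sq, mul_apply_eq_comp, h, map_smul, ih,
        smul_smul, ← pow_succ']
  have hseries := (NormedSpace.exp_series_hasSum_exp' (𝕂 := ℝ) T).mapL (apply ℝ E v)
  refine hseries.unique (HasSum.even_add_odd ?_ ?_)
  · convert (hasSum_cos θ).smul_const v using 1
    funext k
    rw [apply_apply, _root_.smul_apply, heven, smul_smul, neg_pow, pow_mul]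
    ring_nf
  · convert (hasSum_sinc θ).smul_const (T v) using 1
    funext k
    rw [apply_apply, _root_.smul_apply, pow_succ', mul_apply_eq_comp, heven, map_smul, smul_smul]
    ring_nf

end Exp

section InnerProduct

variable {E : Type*} [NormedAddCommGroup E] [InnerProductSpace ℝ E]

lemma OrthonormalBasis.mul_norm_sq_le_inner_apply_self {ι : Type*} [Fintype ι]
    (b : OrthonormalBasis ι ℝ E) (S : E →ₗ[ℝ] E) {μ : ι → ℝ} (hμ : ∀ i, S (b i) = μ i • b i)
    {m : ℝ} (hm : ∀ i, m ≤ μ i) (x : E) :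
    m * ‖x‖ ^ 2 ≤ ⟪x, S x⟫_ℝ := by
  have hSx : ⟪x, S x⟫_ℝ = ∑ i, μ i * ⟪b i, x⟫_ℝ ^ 2 := by
    nth_rewrite 2 [← b.sum_repr' x]
    simp only [map_sum, map_smul, hμ, smul_smul, inner_sum, inner_smul_right, real_inner_comm]
    refine Finset.sum_congr rfl fun i _ => ?_
    ring
  simp_rw [hSx, ← b.sum_sq_norm_inner_right x, Finset.mul_sum, Real.norm_eq_abs, sq_abs]
  gcongr with i
  exact hm i

lemma eq_smul_of_norm_le_of_inner_eq {a u : E} {σ r : ℝ} (hu : ‖u‖ = r) (ha : ‖a‖ ≤ σ * r)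
    (h : ⟪u, a⟫_ℝ = σ * r ^ 2) :
    a = σ • u := by
  have hσr : 0 ≤ σ * r := (norm_nonneg a).trans ha
  have hsq : ‖a‖ ^ 2 ≤ (σ * r) ^ 2 := pow_le_pow_left₀ (norm_nonneg a) ha 2
  rw [← sub_eq_zero, ← norm_eq_zero, ← sq_eq_zero_iff]
  apply le_antisymm _ (sq_nonneg _)
  rw [norm_sub_sq_real, inner_smul_right, real_inner_comm, h, norm_smul, hu, Real.norm_eq_abs]
  nlinarith [sq_abs σ]

variable [CompleteSpace E]

lemma inner_apply_left_of_mem_skewAdjoint {T : E →L[ℝ] E} (hT : T ∈ skewAdjoint (E →L[ℝ] E))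
    (x y : E) : ⟪T x, y⟫_ℝ = -⟪x, T y⟫_ℝ := by
  rw [← ContinuousLinearMap.adjoint_inner_right, ← ContinuousLinearMap.star_eq_adjoint,
    skewAdjoint.mem_iff.mp hT, _root_.neg_apply, inner_neg_right]

lemma inner_exp_apply_exp_apply {T : E →L[ℝ] E} (hT : T ∈ skewAdjoint (E →L[ℝ] E)) (x y : E) :
    ⟪NormedSpace.exp T x, NormedSpace.exp T y⟫_ℝ = ⟪x, y⟫_ℝ := by
  -- `exp_mem_unitary_of_mem_skewAdjoint` is stated for normed `ℚ`-algebras.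
  let : NormedAlgebra ℚ (E →L[ℝ] E) := NormedAlgebra.restrictScalars ℚ ℝ _
  have hunit := NormedSpace.exp_mem_unitary_of_mem_skewAdjoint hT
  rw [← ContinuousLinearMap.adjoint_inner_right, ← ContinuousLinearMap.star_eq_adjoint,
    ← mul_apply_eq_comp, Unitary.star_mul_self_of_mem hunit, one_apply_eq_self]

lemma inner_exp_neg_apply_self {T : E →L[ℝ] E} (hT : T ∈ skewAdjoint (E →L[ℝ] E)) (x : E) :
    ⟪x, NormedSpace.exp (-T) x⟫_ℝ = ⟪x, NormedSpace.exp T x⟫_ℝ := by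
  rw [← skewAdjoint.mem_iff.mp hT, ← NormedSpace.star_exp, ContinuousLinearMap.star_eq_adjoint,
    ContinuousLinearMap.adjoint_inner_right, real_inner_comm]

theorem cos_mul_norm_sq_le_inner_exp_apply_self [FiniteDimensional ℝ E] {T : E →L[ℝ] E}
    (hT : T ∈ skewAdjoint (E →L[ℝ] E)) {σ : ℝ} (hσπ : σ ≤ π) (hTσ : ∀ y, ‖T y‖ ≤ σ * ‖y‖) (x : E) :
    cos σ * ‖x‖ ^ 2 ≤ ⟪x, NormedSpace.exp T x⟫_ℝ := by
  have hsymm : ((-(T * T) : E →L[ℝ] E) : E →ₗ[ℝ] E).IsSymmetric := by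
    intro y z
    simp only [ContinuousLinearMap.coe_coe, _root_.neg_apply, mul_apply_eq_comp, inner_neg_left,
      inner_neg_right, inner_apply_left_of_mem_skewAdjoint hT, neg_neg]
  set b := hsymm.eigenvectorBasis rfl
  have hTT : ∀ i, T (T (b i)) = -‖T (b i)‖ ^ 2 • b i := by
    intro i
    have hb : T (T (b i)) = -hsymm.eigenvalues rfl i • b i := by
      simpa [b, neg_eq_iff_eq_neg] using hsymm.apply_eigenvectorBasis rfl i
    have h1 : ⟪b i, T (T (b i))⟫_ℝ = -hsymm.eigenvalues rfl i := by
      rw [hb, inner_smul_right, real_inner_self_eq_norm_sq, b.orthonormal.1 i]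
      ring
    have h2 : ⟪b i, T (T (b i))⟫_ℝ = -‖T (b i)‖ ^ 2 := by
      rw [← real_inner_self_eq_norm_sq, inner_apply_left_of_mem_skewAdjoint hT, neg_neg]
    rw [hb, show hsymm.eigenvalues rfl i = ‖T (b i)‖ ^ 2 by linarith]
  have hcos : ∀ i, (NormedSpace.exp T + NormedSpace.exp (-T)) (b i) =
      (2 * cos ‖T (b i)‖) • b i := by
    intro i
    rw [_root_.add_apply, T.exp_apply_of_apply_apply_eq (hTT i),
      (-T).exp_apply_of_apply_apply_eq (θ := ‖T (b i)‖) (by simpa using hTT i)]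
    simp only [_root_.neg_apply]
    module
  have hle : ∀ i, 2 * cos σ ≤ 2 * cos ‖T (b i)‖ := by
    intro i
    have hbi : ‖T (b i)‖ ≤ σ := by simpa [b.orthonormal.1 i] using hTσ (b i)
    gcongr
    exact cos_le_cos_of_nonneg_of_le_pi (norm_nonneg _) hσπ hbi
  have := b.mul_norm_sq_le_inner_apply_self _ hcos hle x
  rw [ContinuousLinearMap.coe_coe, _root_.add_apply, inner_add_right,
    inner_exp_neg_apply_self hT] at this
  linarith

theorem norm_exp_apply_sub_self_le [FiniteDimensional ℝ E] {T : E →L[ℝ] E}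
    (hT : T ∈ skewAdjoint (E →L[ℝ] E)) {σ : ℝ} (hσ0 : 0 ≤ σ) (hσπ : σ ≤ π)
    (hTσ : ∀ y, ‖T y‖ ≤ σ * ‖y‖) (x : E) :
    ‖NormedSpace.exp T x - x‖ ≤ 2 * sin (σ / 2) * ‖x‖ := by
  have hsq : ‖NormedSpace.exp T x - x‖ ^ 2 ≤ (2 * sin (σ / 2) * ‖x‖) ^ 2 := by
    have hcos := cos_mul_norm_sq_le_inner_exp_apply_self hT hσπ hTσ x
    have hhalf : cos σ = 1 - 2 * sin (σ / 2) ^ 2 := by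
      have h := cos_two_mul' (σ / 2)
      rw [show 2 * (σ / 2) = σ by ring] at h
      linarith [sin_sq_add_cos_sq (σ / 2)]
    rw [norm_sub_sq_real, real_inner_comm, ← real_inner_self_eq_norm_sq (NormedSpace.exp T x),
      inner_exp_apply_exp_apply hT, real_inner_self_eq_norm_sq]
    nlinarith
  have hsin : 0 ≤ sin (σ / 2) := sin_nonneg_of_nonneg_of_le_pi (by linarith) (by linarith)
  exact le_of_sq_le_sq hsq (by positivity)

end InnerProduct

section Plane

variable {E F : Type*} [NormedAddCommGroup E] [InnerProductSpace ℝ E]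
  [NormedAddCommGroup F] [InnerProductSpace ℝ F]

lemma LinearIsometry.inner_self_apply_eq_zero_of_apply_apply_eq_neg (J : F →ₗᵢ[ℝ] F)
    (hJ : ∀ f, J (J f) = -f) (f : F) : ⟪f, J f⟫_ℝ = 0 := by
  have h := J.inner_map_map f (J f)
  rw [hJ, inner_neg_right, real_inner_comm] at h
  linarith

lemma apply_map_eq_smul_map_of_inner_eq {T : E →L[ℝ] E} {σ : ℝ} (hTσ : ∀ y, ‖T y‖ ≤ σ * ‖y‖)
    (V : F →ₗᵢ[ℝ] E) (J : F →ₗᵢ[ℝ] F) (hVT : ∀ f g, ⟪V f, T (V g)⟫_ℝ = σ * ⟪f, J g⟫_ℝ) (f : F) :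
    T (V f) = σ • V (J f) := by
  refine eq_smul_of_norm_le_of_inner_eq (r := ‖f‖) (by simp) (by simpa using hTσ (V f)) ?_
  rw [hVT, real_inner_self_eq_norm_sq, J.norm_map]

theorem norm_sq_mul_cos_half_le_inner_exp_apply_sub_self [FiniteDimensional ℝ E] {T : E →L[ℝ] E}
    (hT : T ∈ skewAdjoint (E →L[ℝ] E)) {σ : ℝ} (hσ0 : 0 < σ) (hσπ : σ ≤ π)
    (hTσ : ∀ y, ‖T y‖ ≤ σ * ‖y‖) (V : F →ₗᵢ[ℝ] E) (J : F →ₗᵢ[ℝ] F) (hJ : ∀ f, J (J f) = -f)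
    (hVT : ∀ f g, ⟪V f, T (V g)⟫_ℝ = σ * ⟪f, J g⟫_ℝ) {x : E} (hx : ‖x‖ = 1) {c : F}
    (hc : ∀ f, ⟪x, V f⟫_ℝ = ⟪c, f⟫_ℝ) (hfix : NormedSpace.exp T x ≠ x) :
    ‖V (J c)‖ ^ 2 * cos (σ / 2) ≤
      ⟪‖NormedSpace.exp T x - x‖⁻¹ • (NormedSpace.exp T x - x),
        NormedSpace.exp T (V (J c))⟫_ℝ := by
  set R := NormedSpace.exp T
  have hTV := apply_map_eq_smul_map_of_inner_eq hTσ V J hVT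
  have hTw : T (V (J c)) = -σ • V c := by rw [hTV, hJ, map_neg, smul_neg, neg_smul]
  have hTTw : T (T (V (J c))) = -σ ^ 2 • V (J c) := by
    rw [hTw, map_smul, hTV, smul_smul]
    congr 1
    ring
  have hRw : R (V (J c)) = cos σ • V (J c) - sin σ • V c := by
    rw [T.exp_apply_of_apply_apply_eq hTTw, hTw, smul_smul, mul_neg, mul_comm, mul_sinc,
      neg_smul, sub_eq_add_neg]
  have hxw : ⟪x, V (J c)⟫_ℝ = 0 := by
    rw [hc, J.inner_self_apply_eq_zero_of_apply_apply_eq_neg hJ]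
  have hnum : ⟪R x - x, R (V (J c))⟫_ℝ = sin σ * ‖c‖ ^ 2 := by
    rw [inner_sub_left, inner_exp_apply_exp_apply hT, hRw, inner_sub_right, inner_smul_right,
      inner_smul_right, hxw, hc, real_inner_self_eq_norm_sq]
    ring
  have hden : ‖R x - x‖ ≤ 2 * sin (σ / 2) := by
    simpa [hx] using norm_exp_apply_sub_self_le hT hσ0.le hσπ hTσ x
  have hpos : 0 < ‖R x - x‖ := norm_pos_iff.mpr (sub_ne_zero.mpr hfix)
  have hdouble : sin σ = 2 * sin (σ / 2) * cos (σ / 2) := by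
    rw [← sin_two_mul]
    ring_nf
  rw [real_inner_smul_left, hnum, V.norm_map, J.norm_map, inv_mul_eq_div, le_div_iff₀ hpos,
    hdouble]
  have hsin : 0 ≤ sin (σ / 2) := sin_nonneg_of_nonneg_of_le_pi (by linarith) (by linarith)
  have hcos : 0 ≤ cos (σ / 2) := cos_nonneg_of_mem_Icc ⟨by linarith [pi_pos], by linarith⟩
  nlinarith [mul_le_mul_of_nonneg_left hden (mul_nonneg (sq_nonneg ‖c‖) hcos)]

end Plane

namespace Matrix

variable {l m n : Type*} [Fintype m] [DecidableEq m] [Fintype n] [DecidableEq n]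

-- The norm is only needed to state the exponential series; any norm gives the same topology.
lemma toEuclideanCLM_exp (L : Matrix n n ℝ) :
    toEuclideanCLM (n := n) (𝕜 := ℝ) (NormedSpace.exp L) =
      NormedSpace.exp (toEuclideanCLM (n := n) (𝕜 := ℝ) L) := by
  let : NormedRing (Matrix n n ℝ) := Matrix.linftyOpNormedRing
  let : NormedAlgebra ℝ (Matrix n n ℝ) := Matrix.linftyOpNormedAlgebra
  exact NormedSpace.map_exp_of_mem_ball (𝕂 := ℝ) (toEuclideanCLM (n := n) (𝕜 := ℝ))
    (LinearMap.continuous_of_finiteDimensional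
      (toEuclideanCLM (n := n) (𝕜 := ℝ)).toAlgEquiv.toLinearMap) L
    ((NormedSpace.expSeries_radius_eq_top ℝ (Matrix n n ℝ)).symm ▸ edist_lt_top _ _)

lemma toEuclideanCLM_mem_skewAdjoint {L : Matrix n n ℝ} (hL : Lᵀ = -L) :
    toEuclideanCLM (n := n) (𝕜 := ℝ) L ∈ skewAdjoint _ := by
  rw [skewAdjoint.mem_iff, ← map_star, star_eq_conjTranspose,
    conjTranspose_eq_transpose_of_trivial, hL, map_neg]

lemma toEuclideanLin_mul_apply (A : Matrix l m ℝ) (B : Matrix m n ℝ) (x : EuclideanSpace ℝ n) :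
    toEuclideanLin (A * B) x = toEuclideanLin A (toEuclideanLin B x) := by
  simp [toLpLin_apply, mulVec_mulVec]

lemma inner_toEuclideanLin_left (A : Matrix m n ℝ) (x : EuclideanSpace ℝ n)
    (y : EuclideanSpace ℝ m) :
    ⟪toEuclideanLin A x, y⟫_ℝ = ⟪x, toEuclideanLin Aᵀ y⟫_ℝ := by
  rw [← conjTranspose_eq_transpose_of_trivial, toEuclideanLin_conjTranspose_eq_adjoint,
    LinearMap.adjoint_inner_right]

lemma inner_toEuclideanLin_toEuclideanLin {U : Matrix m n ℝ} (hU : Uᵀ * U = 1)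
    (x y : EuclideanSpace ℝ n) :
    ⟪toEuclideanLin U x, toEuclideanLin U y⟫_ℝ = ⟪x, y⟫_ℝ := by
  rw [inner_toEuclideanLin_left, ← toEuclideanLin_mul_apply, hU]
  simp

end Matrix

lemma A2_mul_self : A2 * A2 = -1 := by
  ext i j
  fin_cases i <;> fin_cases j <;> simp [A2]

lemma A2_transpose_mul_self : A2ᵀ * A2 = 1 := by
  ext i j
  fin_cases i <;> fin_cases j <;> simp [A2, mul_apply, Fin.sum_univ_two]

theorem stmt10_general {d : ℕ} (R L : Matrix (Fin d) (Fin d) ℝ)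
    (hL : Lᵀ = -L) (hexp : R = NormedSpace.exp L)
    (σ : ℝ) (hσ0 : 0 < σ) (hσπ : σ ≤ Real.pi)
    (hnorm : ∀ x : EuclideanSpace ℝ (Fin d), ‖Matrix.toEuclideanLin L x‖ ≤ σ * ‖x‖)
    (U : Matrix (Fin d) (Fin 2) ℝ) (hU : Uᵀ * U = 1) (hUL : Uᵀ * L * U = σ • A2)
    (x : EuclideanSpace ℝ (Fin d)) (hx : ‖x‖ = 1)
    (hfix : Matrix.toEuclideanLin R x ≠ x) :
    ‖Matrix.toEuclideanLin (U * A2 * Uᵀ) x‖ ^ 2 * Real.cos (σ / 2) ≤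
      ⟪‖Matrix.toEuclideanLin R x - x‖⁻¹ • (Matrix.toEuclideanLin R x - x),
        Matrix.toEuclideanLin (R * (U * A2 * Uᵀ)) x⟫_ℝ := by
  set T := toEuclideanCLM (n := Fin d) (𝕜 := ℝ) L
  have hR : ∀ y, toEuclideanLin R y = NormedSpace.exp T y := by
    rw [hexp, ← toEuclideanCLM_exp]
    exact fun y => rfl
  let V := (toEuclideanLin U).isometryOfInner (inner_toEuclideanLin_toEuclideanLin hU)
  let J := (toEuclideanLin A2).isometryOfInner
    (inner_toEuclideanLin_toEuclideanLin A2_transpose_mul_self)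
  have hJ : ∀ f, J (J f) = -f := fun f => by
    change toEuclideanLin A2 (toEuclideanLin A2 f) = -f
    simp [← toEuclideanLin_mul_apply, A2_mul_self]
  have hVT : ∀ f g, ⟪V f, T (V g)⟫_ℝ = σ * ⟪f, J g⟫_ℝ := fun f g => by
    change ⟪toEuclideanLin U f, toEuclideanLin L (toEuclideanLin U g)⟫_ℝ =
      σ * ⟪f, toEuclideanLin A2 g⟫_ℝ
    rw [inner_toEuclideanLin_left, ← toEuclideanLin_mul_apply, ← toEuclideanLin_mul_apply,
      hUL, map_smul, LinearMap.smul_apply, inner_smul_right]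
  have hc : ∀ f, ⟪x, V f⟫_ℝ = ⟪toEuclideanLin Uᵀ x, f⟫_ℝ := fun f => by
    rw [inner_toEuclideanLin_left, transpose_transpose]
    rfl
  rw [toEuclideanLin_mul_apply R, toEuclideanLin_mul_apply, toEuclideanLin_mul_apply, hR, hR]
  exact norm_sq_mul_cos_half_le_inner_exp_apply_sub_self (toEuclideanCLM_mem_skewAdjoint hL)
    hσ0 hσπ hnorm V J hJ hVT hx hc (by rwa [← hR])

theorem stmt10 {d : ℕ} (R L : Matrix (Fin d) (Fin d) ℝ) (hR : Rᵀ * R = 1) (hdet : R.det = 1)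
    (hRI : R ≠ 1) (hL : Lᵀ = -L) (hexp : R = NormedSpace.exp L)
    (σ : ℝ) (hσ0 : 0 < σ) (hσπ : σ ≤ Real.pi)
    (hnorm : ∀ x : EuclideanSpace ℝ (Fin d), ‖Matrix.toEuclideanLin L x‖ ≤ σ * ‖x‖)
    (U : Matrix (Fin d) (Fin 2) ℝ) (hU : Uᵀ * U = 1) (hUL : Uᵀ * L * U = σ • A2)
    (x : EuclideanSpace ℝ (Fin d)) (hx : ‖x‖ = 1)
    (hfix : Matrix.toEuclideanLin R x ≠ x) :
    ‖Matrix.toEuclideanLin (U * A2 * Uᵀ) x‖ ^ 2 * Real.cos (σ / 2) ≤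
      ⟪‖Matrix.toEuclideanLin R x - x‖⁻¹ • (Matrix.toEuclideanLin R x - x),
        Matrix.toEuclideanLin (R * (U * A2 * Uᵀ)) x⟫_ℝ :=
  stmt10_general R L hL hexp σ hσ0 hσπ hnorm U hU hUL x hx hfix
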